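/- arXiv:math/0402402 — 2 statements merged into one kernel-verified Lean document; each statement's English description precedes it below -/
import Mathlib

section
/- Let f : ℤ^m → ℤ^n be a ℤ-linear map whose matrix has the block form [[M, X],[0, Y]] where M is the n'×n' circulant matrix with 1's on the diagonal and superdiagonal (cyclically) for n' odd. Suppose additionally that each column of the full matrix has exactly two nonzero entries, each equal to ±1. Then the vector (1,1,...,1,0,...,0) (ones in the first n' coordinates) represents a 2-torsion element in coker(f): its double lies in the image of f, but it does not itself lie in the image. -/
/-- Block matrix torsion: if f : ℤ^m → ℤ^n has matrix [[M, X], [0, Y]] with M the n'×n'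
circulant matrix (1's on diagonal and superdiagonal, cyclically) for n' odd, and every
column of the full matrix has exactly two nonzero entries, each equal to ±1, then the
vector with 1's in the first n' coordinates and 0's elsewhere represents a 2-torsion
element of coker(f): its double is in the image of f but it is not itself. -/
theorem block_matrix_two_torsion
    (n' : ℕ) (hn0 : 0 < n') (hodd : Odd n')
    (ρ σ : Type) [Fintype ρ] [Fintype σ] [DecidableEq ρ] [DecidableEq σ]
    (A : Matrix (Fin n' ⊕ ρ) (Fin n' ⊕ σ) ℤ)
    (hM : ∀ i j : Fin n',
      A (Sum.inl i) (Sum.inl j) = if j = i ∨ (j : ℕ) = ((i : ℕ) + 1) % n' then 1 else 0)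
    (hzero : ∀ (i : ρ) (j : Fin n'), A (Sum.inr i) (Sum.inl j) = 0)
    (hcol : ∀ j, ∃ r₁ r₂, r₁ ≠ r₂ ∧ (A r₁ j = 1 ∨ A r₁ j = -1) ∧
      (A r₂ j = 1 ∨ A r₂ j = -1) ∧ ∀ r, r ≠ r₁ → r ≠ r₂ → A r j = 0) :
    (∃ x, A.mulVec x = 2 • Sum.elim (fun _ : Fin n' => (1 : ℤ)) (fun _ : ρ => 0)) ∧
    ¬ ∃ x, A.mulVec x = Sum.elim (fun _ : Fin n' => (1 : ℤ)) (fun _ : ρ => 0) := by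
  constructor
  · -- existence of preimage of the doubled vector
    rcases eq_or_lt_of_le (show 1 ≤ n' from hn0) with h1 | h2
    · -- n' = 1 : the hypotheses are contradictory
      exfalso
      obtain ⟨r₁, r₂, hne, ha, hb, h0⟩ := hcol (Sum.inl ⟨0, hn0⟩)
      have hval : ∀ r : ρ, A (Sum.inr r) (Sum.inl ⟨0, hn0⟩) = 0 := fun r => hzero r _
      obtain ⟨a, rfl⟩ : ∃ a, r₁ = Sum.inl a := by
        cases r₁ with
        | inl a => exact ⟨a, rfl⟩
        | inr a => rw [hval a] at ha; omega
      obtain ⟨b, rfl⟩ : ∃ b, r₂ = Sum.inl b := by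
        cases r₂ with
        | inl b => exact ⟨b, rfl⟩
        | inr b => rw [hval b] at hb; omega
      apply hne
      have ha2 := a.isLt
      have hb2 := b.isLt
      have : a = b := Fin.ext (by omega)
      rw [this]
    · -- n' ≥ 2 : take the all-ones vector on the first block
      refine ⟨Sum.elim (fun _ => 1) (fun _ => 0), ?_⟩
      funext r
      cases r with
      | inl i =>
        have hk : ((i : ℕ) + 1) % n' < n' := Nat.mod_lt _ hn0
        set k : Fin n' := ⟨((i : ℕ) + 1) % n', hk⟩ with hkdef
        have hki : k ≠ i := by
          have hi := i.isLt
          intro h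
          have : ((i : ℕ) + 1) % n' = (i : ℕ) := congrArg Fin.val h
          rcases lt_or_eq_of_le (Nat.succ_le_of_lt hi) with h' | h'
          · rw [Nat.mod_eq_of_lt h'] at this; omega
          · have h'' : (i : ℕ) + 1 = n' := h'
            rw [h'', Nat.mod_self] at this
            omega
        have hrow : ∀ j : Fin n',
            A (Sum.inl i) (Sum.inl j)
              = (if j = i then (1:ℤ) else 0) + (if j = k then (1:ℤ) else 0) := by
          intro j
          rw [hM i j]
          have hjk : (j : ℕ) = ((i : ℕ) + 1) % n' ↔ j = k := by
            constructor
            · intro h; exact Fin.ext h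
            · intro h; rw [h]
          by_cases h1 : j = i <;> by_cases h2 : j = k
          all_goals simp [h1, h2, hjk, hki, Ne.symm hki]
          all_goals rfl
        simp only [Matrix.mulVec, dotProduct, Fintype.sum_sum_type,
          Sum.elim_inl, Sum.elim_inr, mul_one, mul_zero, Finset.sum_const_zero, add_zero,
          Pi.smul_apply, smul_eq_mul]
        rw [Finset.sum_congr rfl (fun j _ => hrow j), Finset.sum_add_distrib]
        simp
      | inr i =>
        simp only [Matrix.mulVec, dotProduct, Fintype.sum_sum_type,
          Sum.elim_inl, Sum.elim_inr, mul_one, mul_zero, Finset.sum_const_zero, add_zero,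
          Pi.smul_apply, smul_eq_mul]
        rw [Finset.sum_congr rfl (fun j _ => hzero i j)]
        simp
  · -- no preimage of the vector itself: parity obstruction
    rintro ⟨x, hx⟩
    have hcols : ∀ j, Even (∑ r, A r j) := by
      intro j
      obtain ⟨r₁, r₂, hne, ha, hb, h0⟩ := hcol j
      have : ∑ r, A r j
          = ∑ r, ((if r = r₁ then A r₁ j else 0) + (if r = r₂ then A r₂ j else 0)) := by
        refine Finset.sum_congr rfl fun r _ => ?_
        by_cases h1 : r = r₁ <;> by_cases h2 : r = r₂
        all_goals simp [h1, h2, hne, Ne.symm hne, fun a b => h0 r a b]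
      rw [this, Finset.sum_add_distrib, Finset.sum_ite_eq' Finset.univ r₁,
        Finset.sum_ite_eq' Finset.univ r₂]
      simp only [Finset.mem_univ, if_true]
      rcases ha with h | h <;> rcases hb with h' | h' <;> rw [h, h'] <;> decide
    have hswap : ∑ r, A.mulVec x r = ∑ j, (∑ r, A r j) * x j := by
      simp only [Matrix.mulVec, dotProduct]
      rw [Finset.sum_comm]
      exact Finset.sum_congr rfl fun j _ => by rw [Finset.sum_mul]
    have heven : Even (∑ r, A.mulVec x r) := by
      rw [hswap]
      exact Finset.even_sum _ fun j _ => (hcols j).mul_right _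
    rw [hx] at heven
    have : (∑ r, Sum.elim (fun _ : Fin n' => (1:ℤ)) (fun _ : ρ => 0) r) = (n' : ℤ) := by
      simp [Fintype.sum_sum_type]
    rw [this] at heven
    have : Even n' := by exact_mod_cast heven
    exact Nat.not_even_iff_odd.mpr hodd this
end

section
/- For even n ≥ 4, consider the ℤ-linear map d : ℤ^{n(n-1)} → ℤ^{n(n-1)/2} defined on generators S_{i,(c)} (indexed by a crossing i ∈ {1,...,n} and one of the n-1 choices c) whose images are sums/differences of two basis vectors S_{i,j} (1 ≤ i < j ≤ n) as follows: for each fixed i, the (n-1)×(n-1) block of d restricted to generators with first index i is, up to signs of columns, the circulant matrix with 1's on the diagonal and superdiagonal. Then coker(d) ≅ ℤ/2ℤ, generated by the class of any single basis vector S_{i,j}. -/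
/-!
Reducing each coordinate sum mod 2 kills every column of `D`, since a column is a sum of two
signed basis vectors. Conversely, the column relations say that consecutive signed basis vectors
`±S_{i,o_i(m)}` in row `i` are negatives of each other in the cokernel; as the row has odd length
`n - 1` and wraps around, each such class equals its own negative, so all `S_{i,j}` of row `i`
have one common class of order at most two, and `S_{i,j} = S_{j,i}` makes it the same for all rows.
Hence the cokernel is exactly the kernel of the parity map onto `ZMod 2`.
-/

open Function Submodule

section Parity

variable (ι : Type*) [Fintype ι]

def parity : (ι → ℤ) →ₗ[ℤ] ZMod 2 :=
  Fintype.linearCombination ℤ fun _ => 1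

variable {ι}

theorem parity_apply (f : ι → ℤ) : parity ι f = ((∑ c, f c : ℤ) : ZMod 2) := by
  simp [parity, Fintype.linearCombination_apply]

variable [DecidableEq ι]

theorem parity_single (c : ι) (m : ℤ) : parity ι (Pi.single c m) = m := by
  simp [parity]

theorem parity_surjective [Nonempty ι] : Surjective (parity ι) := by
  obtain ⟨c⟩ := ‹Nonempty ι›
  exact fun z => ⟨Pi.single c z.val, by simp [parity_single]⟩

theorem ker_parity_le {R : Submodule ℤ (ι → ℤ)} (u : (ι → ℤ) ⧸ R)
    (hu : ∀ c, R.mkQ (Pi.single c 1) = u) (hneg : -u = u) :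
    LinearMap.ker (parity ι) ≤ R := by
  intro f hf
  have hmk : R.mkQ f = (∑ c, f c) • u := by
    conv_lhs => rw [← Finset.univ_sum_single f]
    rw [map_sum, Finset.sum_smul]
    refine Finset.sum_congr rfl fun c _ => ?_
    rw [← hu c, ← map_zsmul, ← Pi.single_smul', smul_eq_mul, mul_one]
  obtain ⟨t, ht⟩ : (2 : ℤ) ∣ ∑ c, f c :=
    (ZMod.intCast_zmod_eq_zero_iff_dvd _ 2).1 (by rwa [← parity_apply])
  rw [← Submodule.Quotient.mk_eq_zero, ← mkQ_apply, hmk, ht, mul_comm, mul_smul, two_smul,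
    neg_eq_iff_add_eq_zero.1 hneg, smul_zero]

theorem exists_eq_smul_mk_single {R : Submodule ℤ (ι → ℤ)} (hR : R = LinearMap.ker (parity ι))
    (c : ι) (x : (ι → ℤ) ⧸ R) : ∃ m : ℤ, x = m • Submodule.Quotient.mk (Pi.single c 1) := by
  subst hR
  obtain ⟨f, rfl⟩ := Submodule.Quotient.mk_surjective _ x
  refine ⟨∑ c', f c', ?_⟩
  rw [← Submodule.Quotient.mk_smul, Submodule.Quotient.eq, LinearMap.mem_ker, map_sub, map_smul,
    parity_single, parity_apply, zsmul_eq_mul, Int.cast_one, mul_one, sub_self]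

end Parity

namespace Function.Antiperiodic

variable {G : Type*} [AddGroup G] {v : ℕ → G} {p : ℕ}

theorem neg_eq_of_periodic_of_odd (ha : Antiperiodic v 1) (hp : Periodic v p) (hodd : Odd p)
    (m : ℕ) : -v m = v m := by
  obtain ⟨k, rfl⟩ := hodd
  rw [← ha.nat_odd_mul_antiperiodic k m]
  convert hp m using 2
  push_cast
  ring

theorem eq_apply_zero_of_periodic_of_odd (ha : Antiperiodic v 1) (hp : Periodic v p)
    (hodd : Odd p) (m : ℕ) : v m = v 0 := by
  induction m with
  | zero => rfl
  | succ m ih => rw [ha m, ha.neg_eq_of_periodic_of_odd hp hodd, ih]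

end Function.Antiperiodic

section TorusLink

variable {n : ℕ} {ι : Type*} [DecidableEq ι]
  (pr : Fin n → Fin n → ι) (o : Fin n → ℕ → Fin n) (ε : Fin n → Fin n → ℤ)

def signedBasis (i : Fin n) (m : ℕ) : ι → ℤ :=
  ε i (o i m) • Pi.single (pr i (o i m)) 1

variable {pr o ε}

theorem signedBasis_periodic (ho_per : ∀ i m, o i (m + (n - 1)) = o i m) (i : Fin n) :
    Periodic (signedBasis pr o ε i) (n - 1) := fun m => by
  simp only [signedBasis, ho_per]

theorem parity_signedBasis [Fintype ι] (hε : ∀ i j, ε i j = 1 ∨ ε i j = -1) (i : Fin n)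
    (m : ℕ) : parity ι (signedBasis pr o ε i m) = 1 := by
  rw [signedBasis, map_zsmul, parity_single]
  rcases hε i (o i m) with h | h <;> simp [h]

variable {D : Matrix ι (Fin n × Fin (n - 1)) ℤ}

theorem col_eq_signedBasis_add
    (hD : ∀ (i : Fin n) (k : Fin (n - 1)) (c : ι),
      D c (i, k) = ε i (o i (k : ℕ)) * (if c = pr i (o i (k : ℕ)) then 1 else 0) +
        ε i (o i ((k : ℕ) + 1)) * (if c = pr i (o i ((k : ℕ) + 1)) then 1 else 0))
    (i : Fin n) (k : Fin (n - 1)) :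
    D.col (i, k) = signedBasis pr o ε i k + signedBasis pr o ε i (k + 1) := by
  ext c
  simp [hD, signedBasis, Pi.single_apply]

theorem signedBasis_add_succ_mem_range
    (hcol : ∀ i k, D.col (i, k) = signedBasis pr o ε i k + signedBasis pr o ε i (k + 1))
    (ho_per : ∀ i m, o i (m + (n - 1)) = o i m) (hn : 0 < n - 1) (i : Fin n) (k : ℕ) :
    signedBasis pr o ε i k + signedBasis pr o ε i (k + 1) ∈ LinearMap.range D.mulVecLin := by
  have hper : Periodic (fun m => signedBasis pr o ε i m + signedBasis pr o ε i (m + 1)) (n - 1) :=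
    fun m => by
      dsimp only
      rw [add_right_comm, signedBasis_periodic ho_per i m, signedBasis_periodic ho_per i (m + 1)]
  rw [← hper.map_mod_nat k, Matrix.range_mulVecLin]
  exact subset_span ⟨(i, ⟨k % (n - 1), Nat.mod_lt k hn⟩), hcol _ _⟩

section Cokernel

variable {R : Submodule ℤ (ι → ℤ)}

theorem mkQ_signedBasis_antiperiodic
    (hrel : ∀ i k, signedBasis pr o ε i k + signedBasis pr o ε i (k + 1) ∈ R) (i : Fin n) :
    Antiperiodic (fun m => R.mkQ (signedBasis pr o ε i m)) 1 := fun k => by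
  rw [eq_neg_iff_add_eq_zero, ← map_add, mkQ_apply, Submodule.Quotient.mk_eq_zero, add_comm]
  exact hrel i k

theorem neg_mkQ_signedBasis
    (hrel : ∀ i k, signedBasis pr o ε i k + signedBasis pr o ε i (k + 1) ∈ R)
    (ho_per : ∀ i m, o i (m + (n - 1)) = o i m)
    (hodd : Odd (n - 1)) (i : Fin n) (m : ℕ) :
    -R.mkQ (signedBasis pr o ε i m) = R.mkQ (signedBasis pr o ε i m) :=
  (mkQ_signedBasis_antiperiodic hrel i).neg_eq_of_periodic_of_odd
    ((signedBasis_periodic ho_per i).comp _) hodd m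

theorem mkQ_signedBasis_eq_mkQ_signedBasis_zero
    (hrel : ∀ i k, signedBasis pr o ε i k + signedBasis pr o ε i (k + 1) ∈ R)
    (ho_per : ∀ i m, o i (m + (n - 1)) = o i m)
    (hodd : Odd (n - 1)) (i : Fin n) (m : ℕ) :
    R.mkQ (signedBasis pr o ε i m) = R.mkQ (signedBasis pr o ε i 0) :=
  (mkQ_signedBasis_antiperiodic hrel i).eq_apply_zero_of_periodic_of_odd
    ((signedBasis_periodic ho_per i).comp _) hodd m

theorem mkQ_single_eq_mkQ_signedBasis_zero
    (hrel : ∀ i k, signedBasis pr o ε i k + signedBasis pr o ε i (k + 1) ∈ R)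
    (ho_per : ∀ i m, o i (m + (n - 1)) = o i m)
    (hodd : Odd (n - 1)) (hε : ∀ i j, ε i j = 1 ∨ ε i j = -1)
    (ho_surj : ∀ i j, j ≠ i → ∃ m, m < n - 1 ∧ o i m = j) ⦃i j : Fin n⦄ (hji : j ≠ i) :
    R.mkQ (Pi.single (pr i j) 1) = R.mkQ (signedBasis pr o ε i 0) := by
  obtain ⟨m, -, rfl⟩ := ho_surj i j hji
  have hsingle : Pi.single (pr i (o i m)) 1 = ε i (o i m) • signedBasis pr o ε i m := by
    rw [signedBasis, smul_smul, Int.isUnit_mul_self (Int.isUnit_iff.2 (hε i (o i m))), one_smul]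
  rw [hsingle, map_zsmul, ← mkQ_signedBasis_eq_mkQ_signedBasis_zero hrel ho_per hodd i m]
  rcases hε i (o i m) with h | h
  · rw [h, one_smul]
  · rw [h, neg_one_zsmul, neg_mkQ_signedBasis hrel ho_per hodd i m]

theorem ker_parity_le_of_signedBasis_add_succ_mem [Fintype ι]
    (hrel : ∀ i k, signedBasis pr o ε i k + signedBasis pr o ε i (k + 1) ∈ R)
    (ho_per : ∀ i m, o i (m + (n - 1)) = o i m)
    (hodd : Odd (n - 1)) (hε : ∀ i j, ε i j = 1 ∨ ε i j = -1)
    (ho_surj : ∀ i j, j ≠ i → ∃ m, m < n - 1 ∧ o i m = j)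
    (hpr_symm : ∀ i j, pr i j = pr j i) (hpr_surj : ∀ c : ι, ∃ i j, i ≠ j ∧ pr i j = c)
    (i₀ : Fin n) :
    LinearMap.ker (parity ι) ≤ R := by
  have hrow := mkQ_single_eq_mkQ_signedBasis_zero hrel ho_per hodd hε ho_surj
  have hrows_eq : ∀ i, R.mkQ (signedBasis pr o ε i 0) = R.mkQ (signedBasis pr o ε i₀ 0) := by
    intro i
    rcases eq_or_ne i i₀ with rfl | hi
    · rfl
    · rw [← hrow hi.symm, hpr_symm, hrow hi]
  refine ker_parity_le _ (fun c => ?_) (neg_mkQ_signedBasis hrel ho_per hodd i₀ 0)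
  obtain ⟨i, j, hij, rfl⟩ := hpr_surj c
  rw [hrow hij.symm, hrows_eq i]

end Cokernel

theorem range_mulVecLin_le_ker_parity [Fintype ι]
    (hcol : ∀ i k, D.col (i, k) = signedBasis pr o ε i k + signedBasis pr o ε i (k + 1))
    (hε : ∀ i j, ε i j = 1 ∨ ε i j = -1) :
    LinearMap.range D.mulVecLin ≤ LinearMap.ker (parity ι) := by
  rw [Matrix.range_mulVecLin, span_le]
  rintro _ ⟨⟨i, k⟩, rfl⟩
  rw [SetLike.mem_coe, LinearMap.mem_ker, hcol, map_add, parity_signedBasis hε,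
    parity_signedBasis hε]
  rfl

end TorusLink

theorem torus_link_even_coker_general
    (n : ℕ) (heven : Even n) (hn : 4 ≤ n)
    (ι : Type) [Fintype ι] [DecidableEq ι]
    (pr : Fin n → Fin n → ι)
    (hpr_symm : ∀ i j, pr i j = pr j i)
    (hpr_surj : ∀ c : ι, ∃ i j, i ≠ j ∧ pr i j = c)
    (o : Fin n → ℕ → Fin n)
    (ho_per : ∀ i m, o i (m + (n - 1)) = o i m)
    (ho_surj : ∀ i j, j ≠ i → ∃ m, m < n - 1 ∧ o i m = j)
    (ε : Fin n → Fin n → ℤ) (hε : ∀ i j, ε i j = 1 ∨ ε i j = -1)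
    (D : Matrix ι (Fin n × Fin (n - 1)) ℤ)
    (hD : ∀ (i : Fin n) (k : Fin (n - 1)) (c : ι),
      D c (i, k) = ε i (o i (k : ℕ)) * (if c = pr i (o i (k : ℕ)) then 1 else 0) +
        ε i (o i ((k : ℕ) + 1)) * (if c = pr i (o i ((k : ℕ) + 1)) then 1 else 0)) :
    Nonempty (((ι → ℤ) ⧸ LinearMap.range D.mulVecLin) ≃+ ZMod 2) ∧
    ∀ (i j : Fin n), i ≠ j →
      ∀ x : (ι → ℤ) ⧸ LinearMap.range D.mulVecLin,
        ∃ m : ℤ, x = m • (Submodule.Quotient.mk (Pi.single (pr i j) 1)) := by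
  have hodd : Odd (n - 1) := Nat.Even.sub_odd (by omega) heven odd_one
  have hcol := col_eq_signedBasis_add hD
  have hR : LinearMap.range D.mulVecLin = LinearMap.ker (parity ι) :=
    le_antisymm (range_mulVecLin_le_ker_parity hcol hε)
      (ker_parity_le_of_signedBasis_add_succ_mem
        (signedBasis_add_succ_mem_range hcol ho_per hodd.pos) ho_per hodd hε ho_surj hpr_symm
        hpr_surj ⟨0, by omega⟩)
  have : Nonempty ι := ⟨pr ⟨0, by omega⟩ ⟨1, by omega⟩⟩
  exact ⟨⟨((quotEquivOfEq _ _ hR).trans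
      (LinearMap.quotKerEquivOfSurjective _ parity_surjective)).toAddEquiv⟩,
    fun i j _ => exists_eq_smul_mk_single hR _⟩

/-- Abstract form of Lemma 3.1: for even n ≥ 4, the map d : ℤ^{n(n-1)} → ℤ^{n(n-1)/2} on
generators S_{i,(c)} (i a crossing, c one of n-1 choices) whose block for each fixed i is,
up to signs of columns, the circulant matrix with 1's on the diagonal and superdiagonal
(target basis the unordered pairs S_{i,j} = S_{j,i}, i ≠ j), has cokernel ℤ/2ℤ generated
by the class of any single basis vector S_{i,j}. -/
theorem torus_link_even_coker
    (n : ℕ) (heven : Even n) (hn : 4 ≤ n)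
    (ι : Type) [Fintype ι] [DecidableEq ι]
    (pr : Fin n → Fin n → ι)
    (hpr_symm : ∀ i j, pr i j = pr j i)
    (hpr_inj : ∀ i j i' j' : Fin n, i ≠ j → i' ≠ j' →
      (pr i j = pr i' j' ↔ (i = i' ∧ j = j') ∨ (i = j' ∧ j = i')))
    (hpr_surj : ∀ c : ι, ∃ i j, i ≠ j ∧ pr i j = c)
    (o : Fin n → ℕ → Fin n)
    (ho_per : ∀ i m, o i (m + (n - 1)) = o i m)
    (ho_ne : ∀ i m, o i m ≠ i)
    (ho_inj : ∀ i a b, a < n - 1 → b < n - 1 → o i a = o i b → a = b)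
    (ho_surj : ∀ i j, j ≠ i → ∃ m, m < n - 1 ∧ o i m = j)
    (ε : Fin n → Fin n → ℤ) (hε : ∀ i j, ε i j = 1 ∨ ε i j = -1)
    (D : Matrix ι (Fin n × Fin (n - 1)) ℤ)
    (hD : ∀ (i : Fin n) (k : Fin (n - 1)) (c : ι),
      D c (i, k) = ε i (o i (k : ℕ)) * (if c = pr i (o i (k : ℕ)) then 1 else 0) +
        ε i (o i ((k : ℕ) + 1)) * (if c = pr i (o i ((k : ℕ) + 1)) then 1 else 0)) :
    Nonempty (((ι → ℤ) ⧸ LinearMap.range D.mulVecLin) ≃+ ZMod 2) ∧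
    ∀ (i j : Fin n), i ≠ j →
      ∀ x : (ι → ℤ) ⧸ LinearMap.range D.mulVecLin,
        ∃ m : ℤ, x = m • (Submodule.Quotient.mk (Pi.single (pr i j) 1)) :=
  torus_link_even_coker_general n heven hn ι pr hpr_symm hpr_surj o ho_per ho_surj ε hε D hD
end
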